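/- Let φ satisfy assumptions (A1)–(A2) with α ∈ (0,2) and a₀ ≤ 1/2, and let (ρ,u) be a smooth solution of the Euler-alignment system on ℝ×[0,T], 1-periodic in x. Define G(x,t) := ∂ₓu(x,t) − (𝓛ρ(·,t))(x). Then G satisfies the continuity equation ∂_t G + ∂ₓ(Gu) = 0 on ℝ×[0,T]. -/

import Mathlib

open Real MeasureTheory Filter Set Topology

noncomputable section

/-- Principal-value Lévy operator: (𝓛 f)(x) = p.v. ∫ φ(x-y)(f(x)-f(y)) dy. -/
def levy (φ f : ℝ → ℝ) (x : ℝ) : ℝ :=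
  limUnder (nhdsWithin (0:ℝ) (Set.Ioi 0))
    (fun ε => ∫ y in {y : ℝ | ε ≤ |x - y|}, φ (x - y) * (f x - f y))

/-- Principal-value alignment force. -/
def alignForce (φ ρ u : ℝ → ℝ) (x : ℝ) : ℝ :=
  limUnder (nhdsWithin (0:ℝ) (Set.Ioi 0))
    (fun ε => ∫ y in {y : ℝ | ε ≤ |x - y|}, φ (x - y) * (u y - u x) * ρ y)

/-- Periodization -/
def phiS (φ : ℝ → ℝ) (x : ℝ) : ℝ := ∑' k : ℤ, φ (x + (k : ℝ))

def supNorm (f : ℝ → ℝ) : ℝ := ⨆ x : ℝ, |f x|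

structure A12 (φ : ℝ → ℝ) (α a₀ c₁ c₂ : ℝ) : Prop where
  αpos : 0 < α
  αlt : α < 2
  a₀pos : 0 < a₀
  a₀le : a₀ ≤ 1/2
  c₁ge : 1 ≤ c₁
  c₂pos : 0 < c₂
  even : ∀ x : ℝ, φ (-x) = φ x
  smooth : ContDiffOn ℝ 4 φ {(0:ℝ)}ᶜ
  lower : ∀ x : ℝ, x ≠ 0 → |x| ≤ a₀ → c₁⁻¹ * |x| ^ (-(1+α)) ≤ φ x
  upper : ∀ x : ℝ, x ≠ 0 → |x| ≤ a₀ → φ x ≤ c₁ * |x| ^ (-(1+α))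
  derivBound : ∀ j : ℕ, 1 ≤ j → j ≤ 4 → ∀ x : ℝ, x ≠ 0 → |x| ≤ a₀ →
    |iteratedDeriv j φ x| ≤ c₁ * |x| ^ (-(1+(j:ℝ)+α))
  mono : ∀ r s : ℝ, 0 < r → r ≤ s → s ≤ a₀ → φ s ≤ φ r
  tailInt : ∀ j : ℕ, j ≤ 4 →
    IntegrableOn (fun x : ℝ => |x| ^ (j:ℝ) * |iteratedDeriv j φ x|) {x : ℝ | a₀ ≤ |x|}
  tailBound : ∀ j : ℕ, j ≤ 4 →
    (∫ x in {x : ℝ | a₀ ≤ |x|}, |x| ^ (j:ℝ) * |iteratedDeriv j φ x|) ≤ c₂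

structure EASol (φ : ℝ → ℝ) (T : ℝ) (ρ u : ℝ → ℝ → ℝ) : Prop where
  smooth_rho : ContDiffOn ℝ (⊤ : ℕ∞) (Function.uncurry ρ) (Set.univ ×ˢ Set.Icc 0 T)
  smooth_u : ContDiffOn ℝ (⊤ : ℕ∞) (Function.uncurry u) (Set.univ ×ˢ Set.Icc 0 T)
  periodic_rho : ∀ x t, ρ (x + 1) t = ρ x t
  periodic_u : ∀ x t, u (x + 1) t = u x t
  mass : ∀ x : ℝ, ∀ t ∈ Set.Icc 0 T,
    derivWithin (fun s => ρ x s) (Set.Icc 0 T) t + deriv (fun y => ρ y t * u y t) x = 0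
  mom : ∀ x : ℝ, ∀ t ∈ Set.Icc 0 T,
    derivWithin (fun s => u x s) (Set.Icc 0 T) t + u x t * deriv (fun y => u y t) x
      = alignForce φ (fun y => ρ y t) (fun y => u y t) x

lemma lip_of_hasDerivWithin {S : Set ℝ} (hS : Convex ℝ S) {f f' : ℝ → ℝ} {C : ℝ}
    (hf : ∀ s ∈ S, HasDerivWithinAt f (f' s) S s) (hC : ∀ s ∈ S, |f' s| ≤ C)
    {s t : ℝ} (hs : s ∈ S) (ht : t ∈ S) : |f s - f t| ≤ C * |s - t| := by
  have := hS.norm_image_sub_le_of_norm_hasDerivWithin_le hf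
    (fun y hy => by simpa [Real.norm_eq_abs] using hC y hy) ht hs
  simpa [Real.norm_eq_abs] using this

lemma hasDerivWithinAt_integral_of_bound
    {X : Type*} [MeasurableSpace X] {μ : Measure X}
    {S : Set ℝ} (hS : Convex ℝ S) {t : ℝ} (ht : t ∈ S)
    (g g' : X → ℝ → ℝ) (b : X → ℝ)
    (hmeas : ∀ s ∈ S, AEStronglyMeasurable (fun a => g a s) μ)
    (hmeas' : AEStronglyMeasurable (fun a => g' a t) μ)
    (hint : Integrable (fun a => g a t) μ)
    (hb : Integrable b μ)
    (hderiv : ∀ a, ∀ s ∈ S, HasDerivWithinAt (g a) (g' a s) S s)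
    (hbound : ∀ a, ∀ s ∈ S, |g' a s| ≤ b a) :
    HasDerivWithinAt (fun s => ∫ a, g a s ∂μ) (∫ a, g' a t ∂μ) S t := by
  have lip : ∀ a, ∀ s ∈ S, |g a s - g a t| ≤ b a * |s - t| := fun a s hs =>
    lip_of_hasDerivWithin hS (hderiv a) (hbound a) hs ht
  have hints : ∀ s ∈ S, Integrable (fun a => g a s) μ := by
    intro s hs
    refine (hint.abs.add (hb.mul_const |s - t|)).mono' (hmeas s hs) ?_
    refine Eventually.of_forall fun a => ?_
    have h1 := lip a s hs
    have h2 : |g a s| - |g a t| ≤ b a * |s - t| :=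
      le_trans (abs_sub_abs_le_abs_sub _ _) h1
    simp only [Real.norm_eq_abs, Pi.add_apply]
    linarith
  rw [hasDerivWithinAt_iff_tendsto_slope]
  have hne : ∀ᶠ s in 𝓝[S \ {t}] t, s ∈ S \ {t} := eventually_mem_nhdsWithin
  have slope_eq : ∀ (a : X) (s : ℝ), slope (g a) t s = (s - t)⁻¹ * (g a s - g a t) := by
    intro a s; rw [slope_def_field]; ring
  have key : ∀ s ∈ S \ {t}, slope (fun s => ∫ a, g a s ∂μ) t s = ∫ a, slope (g a) t s ∂μ := by
    intro s hs
    have : (fun a => slope (g a) t s) = fun a => (s - t)⁻¹ * (g a s - g a t) := by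
      funext a; exact slope_eq a s
    rw [this, MeasureTheory.integral_const_mul, integral_sub (hints s hs.1) hint,
      slope_def_field]
    ring
  apply Tendsto.congr' (by filter_upwards [hne] with s hs using (key s hs).symm)
  apply tendsto_integral_filter_of_dominated_convergence b
  · filter_upwards [hne] with s hs
    have : (fun a => slope (g a) t s) = fun a => (s - t)⁻¹ * (g a s - g a t) := by
      funext a; exact slope_eq a s
    rw [this]
    exact ((hmeas s hs.1).sub hint.aestronglyMeasurable).const_mul _
  · filter_upwards [hne] with s hs
    refine Eventually.of_forall fun a => ?_
    have hst : s ≠ t := hs.2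
    have h0 : 0 < |s - t| := by
      rw [abs_pos]; exact sub_ne_zero.2 hst
    rw [slope_eq, Real.norm_eq_abs, abs_mul, abs_inv]
    rw [← le_div_iff₀' (by positivity)]
    calc |g a s - g a t| ≤ b a * |s - t| := lip a s hs.1
    _ = b a / |s - t|⁻¹ := by field_simp
  · exact hb
  · refine Eventually.of_forall fun a => ?_
    have := hderiv a t ht
    rwa [hasDerivWithinAt_iff_tendsto_slope] at this

lemma exists_bound_of_periodic {T : ℝ} (F : ℝ → ℝ → ℝ)
    (hc : ContinuousOn (Function.uncurry F) (Set.univ ×ˢ Set.Icc 0 T))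
    (hper : ∀ x t, F (x + 1) t = F x t) :
    ∃ M, 0 ≤ M ∧ ∀ x, ∀ t ∈ Set.Icc 0 T, |F x t| ≤ M := by
  obtain ⟨M, hM⟩ :=
    ((isCompact_Icc (a := (0:ℝ)) (b := 1)).prod (isCompact_Icc (a := (0:ℝ)) (b := T))).exists_bound_of_continuousOn
      (hc.mono (Set.prod_mono (subset_univ _) subset_rfl))
  refine ⟨max M 0, le_max_right _ _, fun x t ht => ?_⟩
  have hp : Function.Periodic (fun y => F y t) 1 := fun y => hper y t
  have hfr : F x t = F (Int.fract x) t := by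
    have h0 := hp.sub_int_mul_eq (x := x) ⌊x⌋
    rw [mul_one] at h0
    exact h0.symm
  rw [hfr]
  have hmem : (Int.fract x, t) ∈ Set.Icc (0:ℝ) 1 ×ˢ Set.Icc (0:ℝ) T :=
    ⟨⟨Int.fract_nonneg x, le_of_lt (Int.fract_lt_one x)⟩, ht⟩
  exact le_trans (by simpa [Real.norm_eq_abs] using hM _ hmem) (le_max_left _ _)

lemma hasDerivAt_shift {f : ℝ → ℝ} (hf : Differentiable ℝ f) (c x : ℝ) :
    HasDerivAt (fun y => f (y + c)) (deriv f (x + c)) x := by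
  have h1 := ((hf (x + c)).hasDerivAt).comp x ((hasDerivAt_id x).add_const c)
  rw [mul_one] at h1
  exact h1

lemma hasDerivAt_SD {f : ℝ → ℝ} (hf : Differentiable ℝ f) (z x : ℝ) :
    HasDerivAt (fun y => 2 * f y - f (y - z) - f (y + z))
      (2 * deriv f x - deriv f (x - z) - deriv f (x + z)) x := by
  have h1 : HasDerivAt (fun y => f (y - z)) (deriv f (x - z)) x := by
    simpa [sub_eq_add_neg] using hasDerivAt_shift hf (-z) x
  have h2 : HasDerivAt (fun y => f (y + z)) (deriv f (x + z)) x := hasDerivAt_shift hf z x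
  exact (((hf x).hasDerivAt.const_mul 2).sub h1).sub h2

lemma abs_second_diff_le {f : ℝ → ℝ} (hf1 : Differentiable ℝ f)
    (hf2 : Differentiable ℝ (deriv f)) {M : ℝ}
    (hM : ∀ y, |deriv (deriv f) y| ≤ M) (x z : ℝ) (hz : 0 ≤ z) :
    |2 * f x - f (x - z) - f (x + z)| ≤ 2 * M * z ^ 2 := by
  have lipd : ∀ a b : ℝ, |deriv f a - deriv f b| ≤ M * |a - b| := by
    intro a b
    have := convex_univ.norm_image_sub_le_of_norm_hasDerivWithin_le
      (f' := deriv (deriv f)) (fun y _ => ((hf2 y).hasDerivAt).hasDerivWithinAt)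
      (fun y _ => by simpa [Real.norm_eq_abs] using hM y) (mem_univ b) (mem_univ a)
    simpa [Real.norm_eq_abs] using this
  set g : ℝ → ℝ := fun s => f (x + s) + f (x - s) with hg
  have hderiv : ∀ s ∈ Set.Icc 0 z, HasDerivWithinAt g (deriv f (x + s) - deriv f (x - s)) (Set.Icc 0 z) s := by
    intro s _
    have h1 : HasDerivAt (fun s => f (x + s)) (deriv f (x + s)) s := by
      have := ((hf1 (x + s)).hasDerivAt).comp s ((hasDerivAt_id s).const_add x)
      rw [mul_one] at this
      exact this
    have h2 : HasDerivAt (fun s => f (x - s)) (-deriv f (x - s)) s := by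
      have hin : HasDerivAt (fun s : ℝ => x - s) (-1 : ℝ) s := by
        simpa using (hasDerivAt_id s).const_sub x
      have := ((hf1 (x - s)).hasDerivAt).comp s hin
      rw [mul_neg_one] at this
      exact this
    exact (h1.add h2).hasDerivWithinAt.congr_deriv (sub_eq_add_neg _ _).symm
  have hbd : ∀ s ∈ Set.Icc 0 z, |deriv f (x + s) - deriv f (x - s)| ≤ 2 * M * z := by
    intro s hs
    have := lipd (x + s) (x - s)
    have habs : |(x + s) - (x - s)| = 2 * s := by
      rw [show (x + s) - (x - s) = 2 * s by ring, abs_of_nonneg (by nlinarith [hs.1])]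
    rw [habs] at this
    have hMnn : 0 ≤ M := le_trans (abs_nonneg _) (hM 0)
    nlinarith [hs.1, hs.2]
  have key := lip_of_hasDerivWithin (convex_Icc 0 z) hderiv hbd
    (Set.left_mem_Icc.2 hz) (Set.right_mem_Icc.2 hz)
  have : |g 0 - g z| ≤ (2 * M * z) * |0 - z| := key
  have hgz : g 0 - g z = 2 * f x - f (x - z) - f (x + z) := by
    simp only [hg, add_zero, sub_zero]; ring
  rw [hgz, zero_sub, abs_neg, abs_of_nonneg hz] at this
  calc |2 * f x - f (x - z) - f (x + z)| ≤ 2 * M * z * z := this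
  _ = 2 * M * z ^ 2 := by ring

variable {φ : ℝ → ℝ} {α a₀ c₁ c₂ : ℝ}

/-- inner + outer representation of the principal value -/
def levyR (φ f : ℝ → ℝ) (a₀ x : ℝ) : ℝ :=
  (∫ z in Set.Ioc 0 a₀, φ z * (2 * f x - f (x - z) - f (x + z))) +
  ∫ z in {z : ℝ | a₀ < |z|}, φ z * (f x - f (x - z))

namespace A12

lemma phi_pos (h : A12 φ α a₀ c₁ c₂) {z : ℝ} (hz : z ≠ 0) (hz' : |z| ≤ a₀) : 0 < φ z := by
  refine lt_of_lt_of_le ?_ (h.lower z hz hz')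
  have h1 : (0:ℝ) < |z| := abs_pos.2 hz
  have hc : (0:ℝ) < c₁ := lt_of_lt_of_le one_pos h.c₁ge
  positivity

lemma phi_abs_le (h : A12 φ α a₀ c₁ c₂) {z : ℝ} (hz : z ≠ 0) (hz' : |z| ≤ a₀) :
    |φ z| ≤ c₁ * |z| ^ (-(1+α)) := by
  rw [abs_of_pos (h.phi_pos hz hz')]
  exact h.upper z hz hz'

lemma phi_contOn (h : A12 φ α a₀ c₁ c₂) : ContinuousOn φ {(0:ℝ)}ᶜ :=
  h.smooth.continuousOn

lemma phi_aesm (h : A12 φ α a₀ c₁ c₂) : AEStronglyMeasurable φ (volume : Measure ℝ) := by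
  have h1 := h.phi_contOn.aestronglyMeasurable (μ := volume) isOpen_compl_singleton.measurableSet
  have h2 : ({(0:ℝ)}ᶜ : Set ℝ) =ᵐ[volume] Set.univ := by
    rw [ae_eq_univ]
    simp
  rwa [Measure.restrict_congr_set h2, Measure.restrict_univ] at h1

/-- |φ z| * z^2 ≤ c₁ * z^(1-α) on (0, a₀] -/
lemma phi_mul_sq_le (h : A12 φ α a₀ c₁ c₂) {z : ℝ} (hz : z ∈ Set.Ioc 0 a₀) :
    |φ z| * z ^ 2 ≤ c₁ * z ^ (1 - α) := by
  have hz0 : (0:ℝ) < z := hz.1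
  have habs : |z| = z := abs_of_pos hz0
  have h1 : |φ z| ≤ c₁ * z ^ (-(1+α)) := by
    have := h.phi_abs_le (ne_of_gt hz0) (by rw [habs]; exact hz.2)
    rwa [habs] at this
  have h2 : z ^ (2:ℕ) = z ^ ((2:ℕ):ℝ) := (Real.rpow_natCast z 2).symm
  calc |φ z| * z ^ 2 ≤ (c₁ * z ^ (-(1+α))) * z ^ 2 := by
        apply mul_le_mul_of_nonneg_right h1 (by positivity)
  _ = c₁ * (z ^ (-(1+α)) * z ^ ((2:ℕ):ℝ)) := by rw [← h2]; ring
  _ = c₁ * z ^ (1 - α) := by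
        rw [← Real.rpow_add hz0]
        congr 1
        push_cast
        ring

lemma tail_abs_int (h : A12 φ α a₀ c₁ c₂) :
    IntegrableOn (fun z => |φ z|) {z : ℝ | a₀ < |z|} := by
  have h0 := h.tailInt 0 (by norm_num)
  have he : ∀ z ∈ {z : ℝ | a₀ ≤ |z|}, |z| ^ ((0:ℕ):ℝ) * |iteratedDeriv 0 φ z| = |φ z| := by
    intro z _
    simp [iteratedDeriv_zero]
  have h1 : IntegrableOn (fun z => |φ z|) {z : ℝ | a₀ ≤ |z|} := by
    refine h0.congr_fun he ?_
    exact measurableSet_le measurable_const measurable_abs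
  exact h1.mono_set (fun z (hz : a₀ < |z|) => le_of_lt hz)

lemma out_open : IsOpen {z : ℝ | a₀ < |z|} :=
  isOpen_lt continuous_const continuous_abs

lemma phi_tail_int (h : A12 φ α a₀ c₁ c₂) :
    IntegrableOn φ {z : ℝ | a₀ < |z|} := by
  have hm : AEStronglyMeasurable φ (volume.restrict {z : ℝ | a₀ < |z|}) := by
    refine ContinuousOn.aestronglyMeasurable (h.phi_contOn.mono ?_) out_open.measurableSet
    intro z hz
    simp only [Set.mem_setOf_eq] at hz
    simp only [Set.mem_compl_iff, Set.mem_singleton_iff]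
    intro h0; rw [h0] at hz; simp at hz; linarith [h.a₀pos]
  exact (integrable_norm_iff hm).1 h.tail_abs_int

lemma int_rpow_in (h : A12 φ α a₀ c₁ c₂) :
    IntegrableOn (fun z : ℝ => z ^ (1 - α)) (Set.Ioc 0 a₀) := by
  have := intervalIntegral.intervalIntegrable_rpow' (a := 0) (b := a₀) (r := 1 - α)
    (by linarith [h.αlt])
  rwa [intervalIntegrable_iff_integrableOn_Ioc_of_le h.a₀pos.le] at this

lemma inner_meas (h : A12 φ α a₀ c₁ c₂) {g : ℝ → ℝ} (hg : Continuous g) {s : Set ℝ}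
    (hs : MeasurableSet s) (hs' : s ⊆ {(0:ℝ)}ᶜ) :
    AEStronglyMeasurable (fun z => φ z * g z) (volume.restrict s) := by
  exact ((h.phi_contOn.mono hs').mul (hg.continuousOn)).aestronglyMeasurable hs

lemma ioc_subset_compl (h : A12 φ α a₀ c₁ c₂) : Set.Ioc 0 a₀ ⊆ {(0:ℝ)}ᶜ := by
  intro z hz
  simp only [Set.mem_compl_iff, Set.mem_singleton_iff]
  exact ne_of_gt hz.1

lemma out_subset_compl (h : A12 φ α a₀ c₁ c₂) : {z : ℝ | a₀ < |z|} ⊆ {(0:ℝ)}ᶜ := by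
  intro z hz
  simp only [Set.mem_setOf_eq] at hz
  simp only [Set.mem_compl_iff, Set.mem_singleton_iff]
  intro h0; rw [h0] at hz; simp at hz; linarith [h.a₀pos]

/-- integrability of the symmetrized inner integrand -/
lemma int_inner (h : A12 φ α a₀ c₁ c₂) {f : ℝ → ℝ} {M₂ : ℝ}
    (hf : Differentiable ℝ f) (hf' : Differentiable ℝ (deriv f))
    (hM₂ : ∀ y, |deriv (deriv f) y| ≤ M₂) (x : ℝ) :
    IntegrableOn (fun z => φ z * (2 * f x - f (x - z) - f (x + z))) (Set.Ioc 0 a₀) := by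
  refine Integrable.mono' ((h.int_rpow_in.const_mul (c₁ * (2 * M₂)))) ?_ ?_
  · exact h.inner_meas (by have := hf.continuous; fun_prop) measurableSet_Ioc h.ioc_subset_compl
  · refine (ae_restrict_iff' measurableSet_Ioc).2 (Eventually.of_forall fun z hz => ?_)
    have hsd := abs_second_diff_le hf hf' hM₂ x z hz.1.le
    have hphi := h.phi_mul_sq_le hz
    have hM₂0 : 0 ≤ M₂ := le_trans (abs_nonneg _) (hM₂ 0)
    have hrp : (0:ℝ) ≤ z ^ (1 - α) := Real.rpow_nonneg hz.1.le _
    rw [Real.norm_eq_abs, abs_mul]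
    calc |φ z| * |2 * f x - f (x - z) - f (x + z)| ≤ |φ z| * (2 * M₂ * z ^ 2) :=
          mul_le_mul_of_nonneg_left hsd (abs_nonneg _)
    _ = (2 * M₂) * (|φ z| * z ^ 2) := by ring
    _ ≤ (2 * M₂) * (c₁ * z ^ (1 - α)) := by
          apply mul_le_mul_of_nonneg_left hphi (by positivity)
    _ = c₁ * (2 * M₂) * z ^ (1 - α) := by ring

/-- integrability of the outer integrand -/
lemma int_outer (h : A12 φ α a₀ c₁ c₂) {f : ℝ → ℝ} {M₀ : ℝ}
    (hfc : Continuous f) (hM₀ : ∀ y, |f y| ≤ M₀) (x : ℝ) :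
    IntegrableOn (fun z => φ z * (f x - f (x - z))) {z : ℝ | a₀ < |z|} := by
  refine Integrable.mono' (h.tail_abs_int.const_mul (2 * M₀)) ?_ ?_
  · exact h.inner_meas (by fun_prop) out_open.measurableSet h.out_subset_compl
  · refine Eventually.of_forall fun z => ?_
    rw [Real.norm_eq_abs, abs_mul]
    have : |f x - f (x - z)| ≤ 2 * M₀ := by
      calc |f x - f (x - z)| ≤ |f x| + |f (x - z)| := abs_sub _ _
      _ ≤ 2 * M₀ := by linarith [hM₀ x, hM₀ (x - z)]
    calc |φ z| * |f x - f (x - z)| ≤ |φ z| * (2 * M₀) :=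
          mul_le_mul_of_nonneg_left this (abs_nonneg _)
    _ = 2 * M₀ * |φ z| := by ring

end A12
lemma trunc_change (x ε : ℝ) (g : ℝ → ℝ) :
    ∫ y in {y : ℝ | ε ≤ |x - y|}, g (x - y) = ∫ z in {z : ℝ | ε ≤ |z|}, g z := by
  have hmp : MeasurePreserving (fun t : ℝ => x - t) volume volume :=
    Measure.measurePreserving_sub_left volume x
  have hemb : MeasurableEmbedding (fun t : ℝ => x - t) :=
    (MeasurableEquiv.subLeft x).measurableEmbedding
  have h0 := hmp.setIntegral_preimage_emb hemb g {z : ℝ | ε ≤ |z|}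
  rw [← h0]
  congr 1

lemma neg_change (g : ℝ → ℝ) (s : Set ℝ) :
    ∫ z in Neg.neg ⁻¹' s, g (-z) = ∫ z in s, g z := by
  have hmp : MeasurePreserving (fun t : ℝ => -t) volume volume :=
    Measure.measurePreserving_neg volume
  exact hmp.setIntegral_preimage_emb (MeasurableEquiv.neg ℝ).measurableEmbedding g s

namespace A12

lemma int_ann (h : A12 φ α a₀ c₁ c₂) {w : ℝ → ℝ} (hw : Continuous w) {B : ℝ}
    (hB : ∀ z, |w z| ≤ B) {ε : ℝ} (hε : 0 < ε) {s : Set ℝ} (hs : MeasurableSet s)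
    (hsub : s ⊆ {z : ℝ | ε ≤ |z| ∧ |z| ≤ a₀}) :
    IntegrableOn (fun z => φ z * w z) s := by
  have hsub0 : s ⊆ {(0:ℝ)}ᶜ := by
    intro z hz
    have h1 := (hsub hz).1
    simp only [Set.mem_compl_iff, Set.mem_singleton_iff]
    intro h0
    rw [h0] at h1; simp at h1; linarith
  have hfin : volume s ≠ ⊤ := by
    have hss : s ⊆ Set.Icc (-a₀) a₀ := by
      intro z hz
      exact Set.mem_Icc.2 (abs_le.1 (hsub hz).2)
    exact ne_of_lt (lt_of_le_of_lt (measure_mono hss) measure_Icc_lt_top)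
  refine Measure.integrableOn_of_bounded hfin (h.phi_aesm.mul hw.aestronglyMeasurable)
    (M := c₁ * ε ^ (-(1+α)) * B) ?_
  refine (ae_restrict_iff' hs).2 (Eventually.of_forall fun z hz => ?_)
  obtain ⟨h1, h2⟩ := hsub hz
  have hzne : z ≠ 0 := by
    intro h0; rw [h0] at h1; simp at h1; linarith
  have hrp : |z| ^ (-(1+α)) ≤ ε ^ (-(1+α)) := by
    rw [Real.rpow_neg (abs_nonneg z), Real.rpow_neg hε.le]
    have hle : ε ^ (1+α) ≤ |z| ^ (1+α) :=
      Real.rpow_le_rpow hε.le h1 (by linarith [h.αpos] : (0:ℝ) ≤ 1 + α)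
    exact inv_anti₀ (Real.rpow_pos_of_pos hε _) hle
  have hphi : |φ z| ≤ c₁ * ε ^ (-(1+α)) := by
    refine le_trans (h.phi_abs_le hzne h2) ?_
    have hc : (0:ℝ) < c₁ := lt_of_lt_of_le one_pos h.c₁ge
    exact mul_le_mul_of_nonneg_left hrp hc.le
  have hB0 : 0 ≤ B := le_trans (abs_nonneg _) (hB 0)
  rw [Real.norm_eq_abs, abs_mul]
  calc |φ z| * |w z| ≤ (c₁ * ε ^ (-(1+α))) * B :=
        mul_le_mul hphi (hB z) (abs_nonneg _)
          (mul_nonneg (by linarith [h.c₁ge]) (Real.rpow_nonneg hε.le _))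
  _ = c₁ * ε ^ (-(1+α)) * B := by ring

lemma trunc_split (h : A12 φ α a₀ c₁ c₂) {f : ℝ → ℝ} {M₀ : ℝ}
    (hfc : Continuous f) (hM₀ : ∀ y, |f y| ≤ M₀) {ε : ℝ} (hε : ε ∈ Set.Ioc 0 a₀) (x : ℝ) :
    ∫ z in {z : ℝ | ε ≤ |z|}, φ z * (f x - f (x - z)) =
    (∫ z in Set.Icc ε a₀, φ z * (2 * f x - f (x - z) - f (x + z))) +
    ∫ z in {z : ℝ | a₀ < |z|}, φ z * (f x - f (x - z)) := by
  have hbd : ∀ c : ℝ, ∀ z : ℝ, |f x - f (x - z + c)| ≤ 2 * M₀ := by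
    intro c z
    calc |f x - f (x - z + c)| ≤ |f x| + |f (x - z + c)| := abs_sub _ _
    _ ≤ 2 * M₀ := by linarith [hM₀ x, hM₀ (x - z + c)]
  have hbd1 : ∀ z : ℝ, |f x - f (x - z)| ≤ 2 * M₀ := by
    intro z; simpa using hbd 0 z
  have hbd2 : ∀ z : ℝ, |f x - f (x + z)| ≤ 2 * M₀ := by
    intro z
    have := hbd (2*z) z
    simpa [show x - z + 2*z = x + z by ring] using this
  have hAmeas : MeasurableSet {z : ℝ | ε ≤ |z| ∧ |z| ≤ a₀} := by
    rw [Set.setOf_and]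
    exact (measurableSet_le measurable_const measurable_abs).inter
      (measurableSet_le measurable_abs measurable_const)
  have hIntA : IntegrableOn (fun z => φ z * (f x - f (x - z))) {z : ℝ | ε ≤ |z| ∧ |z| ≤ a₀} :=
    h.int_ann (by fun_prop) hbd1 hε.1 hAmeas subset_rfl
  have hIntOut : IntegrableOn (fun z => φ z * (f x - f (x - z))) {z : ℝ | a₀ < |z|} :=
    h.int_outer hfc hM₀ x
  have hset : {z : ℝ | ε ≤ |z|} = {z : ℝ | ε ≤ |z| ∧ |z| ≤ a₀} ∪ {z : ℝ | a₀ < |z|} := by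
    ext z
    simp only [Set.mem_setOf_eq, Set.mem_union]
    constructor
    · intro hz
      rcases le_or_gt (|z|) a₀ with h'|h'
      · exact Or.inl ⟨hz, h'⟩
      · exact Or.inr h'
    · rintro (⟨h1,_⟩|h1)
      · exact h1
      · linarith [hε.2]
  have hdisj : Disjoint {z : ℝ | ε ≤ |z| ∧ |z| ≤ a₀} {z : ℝ | a₀ < |z|} := by
    rw [Set.disjoint_left]
    rintro z ⟨_, h1⟩ h2
    exact absurd h2 (not_lt.2 h1)
  rw [hset, setIntegral_union hdisj out_open.measurableSet hIntA hIntOut]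
  congr 1
  -- inner part
  have hA : {z : ℝ | ε ≤ |z| ∧ |z| ≤ a₀} = Set.Icc (-a₀) (-ε) ∪ Set.Icc ε a₀ := by
    ext z
    simp only [Set.mem_setOf_eq, Set.mem_union, Set.mem_Icc]
    rcases le_or_gt 0 z with hz|hz
    · rw [abs_of_nonneg hz]
      constructor
      · rintro ⟨h1,h2⟩; exact Or.inr ⟨h1,h2⟩
      · rintro (⟨h1,h2⟩|⟨h1,h2⟩)
        · constructor <;> linarith [hε.1]
        · exact ⟨h1,h2⟩
    · rw [abs_of_neg hz]
      constructor
      · rintro ⟨h1,h2⟩; exact Or.inl ⟨by linarith, by linarith⟩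
      · rintro (⟨h1,h2⟩|⟨h1,h2⟩)
        · exact ⟨by linarith, by linarith⟩
        · constructor <;> linarith [hε.1]
  have hsubL : Set.Icc (-a₀) (-ε) ⊆ {z : ℝ | ε ≤ |z| ∧ |z| ≤ a₀} := by
    rw [hA]; exact Set.subset_union_left
  have hsubR : Set.Icc ε a₀ ⊆ {z : ℝ | ε ≤ |z| ∧ |z| ≤ a₀} := by
    rw [hA]; exact Set.subset_union_right
  have hdisj2 : Disjoint (Set.Icc (-a₀) (-ε)) (Set.Icc ε a₀) := by
    rw [Set.disjoint_left]
    rintro z hz1 hz2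
    rw [Set.mem_Icc] at hz1 hz2
    linarith [hε.1]
  have hIntL : IntegrableOn (fun z => φ z * (f x - f (x - z))) (Set.Icc (-a₀) (-ε)) :=
    h.int_ann (by fun_prop) hbd1 hε.1 measurableSet_Icc hsubL
  have hIntR : IntegrableOn (fun z => φ z * (f x - f (x - z))) (Set.Icc ε a₀) :=
    h.int_ann (by fun_prop) hbd1 hε.1 measurableSet_Icc hsubR
  have hIntR2 : IntegrableOn (fun z => φ z * (f x - f (x + z))) (Set.Icc ε a₀) :=
    h.int_ann (by fun_prop) hbd2 hε.1 measurableSet_Icc hsubR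
  rw [hA, setIntegral_union hdisj2 measurableSet_Icc hIntL hIntR]
  have hneg : ∫ z in Set.Icc (-a₀) (-ε), φ z * (f x - f (x - z)) =
      ∫ z in Set.Icc ε a₀, φ z * (f x - f (x + z)) := by
    have h0 := neg_change (fun z => φ z * (f x - f (x - z))) (Set.Icc (-a₀) (-ε))
    rw [← h0]
    have hpre : (Neg.neg ⁻¹' Set.Icc (-a₀) (-ε) : Set ℝ) = Set.Icc ε a₀ := by
      ext z
      simp only [Set.mem_preimage, Set.mem_Icc]
      constructor
      · rintro ⟨h1,h2⟩; constructor <;> linarith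
      · rintro ⟨h1,h2⟩; constructor <;> linarith
    rw [hpre]
    refine setIntegral_congr_fun measurableSet_Icc fun z _ => ?_
    rw [h.even z]
    ring_nf
  rw [hneg, ← integral_add hIntR2 hIntR]
  refine setIntegral_congr_fun measurableSet_Icc fun z _ => ?_
  ring

end A12

namespace A12

lemma tendsto_inner (h : A12 φ α a₀ c₁ c₂) {f : ℝ → ℝ} {M₂ : ℝ}
    (hf : Differentiable ℝ f) (hf' : Differentiable ℝ (deriv f))
    (hM₂ : ∀ y, |deriv (deriv f) y| ≤ M₂) (x : ℝ) :
    Tendsto (fun ε => ∫ z in Set.Icc ε a₀, φ z * (2 * f x - f (x - z) - f (x + z)))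
      (𝓝[>] (0:ℝ))
      (𝓝 (∫ z in Set.Ioc 0 a₀, φ z * (2 * f x - f (x - z) - f (x + z)))) := by
  set G : ℝ → ℝ := fun z => φ z * (2 * f x - f (x - z) - f (x + z)) with hG
  have hGint : IntegrableOn G (Set.Ioc 0 a₀) := h.int_inner hf hf' hM₂ x
  have key : Tendsto (fun ε => ∫ z, (Set.Icc ε a₀).indicator G z ∂(volume.restrict (Set.Ioc 0 a₀)))
      (𝓝[>] (0:ℝ)) (𝓝 (∫ z, G z ∂(volume.restrict (Set.Ioc 0 a₀)))) := by
    refine tendsto_integral_filter_of_dominated_convergence (fun z => |G z|) ?_ ?_ hGint.abs ?_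
    · exact Eventually.of_forall fun ε => hGint.aestronglyMeasurable.indicator measurableSet_Icc
    · refine Eventually.of_forall fun ε => Eventually.of_forall fun z => ?_
      have := norm_indicator_le_norm_self (s := Set.Icc ε a₀) G z
      simpa [Real.norm_eq_abs] using this
    · filter_upwards [ae_restrict_mem measurableSet_Ioc] with z hz
      have hev : (fun _ : ℝ => G z) =ᶠ[𝓝[>] (0:ℝ)] fun ε => (Set.Icc ε a₀).indicator G z := by
        filter_upwards [Ioo_mem_nhdsGT hz.1] with ε hε
        exact (Set.indicator_of_mem (Set.mem_Icc.2 ⟨hε.2.le, hz.2⟩) G).symm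
      exact Tendsto.congr' hev tendsto_const_nhds
  refine Tendsto.congr' ?_ key
  filter_upwards [Ioc_mem_nhdsGT h.a₀pos] with ε hε
  rw [integral_indicator measurableSet_Icc, Measure.restrict_restrict measurableSet_Icc,
    Set.inter_eq_left.2 (fun z hz => Set.mem_Ioc.2
      ⟨lt_of_lt_of_le hε.1 (Set.mem_Icc.1 hz).1, (Set.mem_Icc.1 hz).2⟩)]

lemma trunc_set_eq (h : A12 φ α a₀ c₁ c₂) {ε : ℝ} (hε : ε ∈ Set.Ioc 0 a₀) :
    {z : ℝ | ε ≤ |z|} = {z : ℝ | ε ≤ |z| ∧ |z| ≤ a₀} ∪ {z : ℝ | a₀ < |z|} := by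
  ext z
  simp only [Set.mem_setOf_eq, Set.mem_union]
  constructor
  · intro hz
    rcases le_or_gt (|z|) a₀ with h'|h'
    · exact Or.inl ⟨hz, h'⟩
    · exact Or.inr h'
  · rintro (⟨h1,_⟩|h1)
    · exact h1
    · linarith [hε.2]

lemma ann_meas : MeasurableSet {z : ℝ | ε' ≤ |z| ∧ |z| ≤ a₀} := by
  rw [Set.setOf_and]
  exact (measurableSet_le measurable_const measurable_abs).inter
    (measurableSet_le measurable_abs measurable_const)

lemma int_trunc (h : A12 φ α a₀ c₁ c₂) {f : ℝ → ℝ} {M₀ : ℝ}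
    (hfc : Continuous f) (hM₀ : ∀ y, |f y| ≤ M₀) {ε : ℝ} (hε : ε ∈ Set.Ioc 0 a₀) (x : ℝ) :
    IntegrableOn (fun z => φ z * (f x - f (x - z))) {z : ℝ | ε ≤ |z|} := by
  rw [h.trunc_set_eq hε]
  have hbd1 : ∀ z : ℝ, |f x - f (x - z)| ≤ 2 * M₀ := by
    intro z
    calc |f x - f (x - z)| ≤ |f x| + |f (x - z)| := abs_sub _ _
    _ ≤ 2 * M₀ := by linarith [hM₀ x, hM₀ (x - z)]
  exact (h.int_ann (by fun_prop) hbd1 hε.1 ann_meas subset_rfl).union (h.int_outer hfc hM₀ x)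

lemma tendsto_trunc (h : A12 φ α a₀ c₁ c₂) {f : ℝ → ℝ} {M₀ M₂ : ℝ}
    (hf : Differentiable ℝ f) (hf' : Differentiable ℝ (deriv f))
    (hM₀ : ∀ y, |f y| ≤ M₀) (hM₂ : ∀ y, |deriv (deriv f) y| ≤ M₂) (x : ℝ) :
    Tendsto (fun ε => ∫ y in {y : ℝ | ε ≤ |x - y|}, φ (x - y) * (f x - f y)) (𝓝[>] (0:ℝ))
      (𝓝 (levyR φ f a₀ x)) := by
  have hfc : Continuous f := hf.continuous
  have heq : ∀ ε ∈ Set.Ioc (0:ℝ) a₀,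
      (∫ y in {y : ℝ | ε ≤ |x - y|}, φ (x - y) * (f x - f y)) =
      (∫ z in Set.Icc ε a₀, φ z * (2 * f x - f (x - z) - f (x + z))) +
      ∫ z in {z : ℝ | a₀ < |z|}, φ z * (f x - f (x - z)) := by
    intro ε hε
    have h1 : (∫ y in {y : ℝ | ε ≤ |x - y|}, φ (x - y) * (f x - f y)) =
        ∫ z in {z : ℝ | ε ≤ |z|}, φ z * (f x - f (x - z)) := by
      rw [← trunc_change x ε (fun z => φ z * (f x - f (x - z)))]
      refine setIntegral_congr_fun (measurableSet_le measurable_const (by fun_prop))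
        fun y _ => ?_
      simp [sub_sub_cancel]
    rw [h1, h.trunc_split hfc hM₀ hε x]
  refine Tendsto.congr' ?_ ((h.tendsto_inner hf hf' hM₂ x).add_const _)
  filter_upwards [Ioc_mem_nhdsGT h.a₀pos] with ε hε
  exact (heq ε hε).symm

lemma levy_eq (h : A12 φ α a₀ c₁ c₂) {f : ℝ → ℝ} {M₀ M₂ : ℝ}
    (hf : Differentiable ℝ f) (hf' : Differentiable ℝ (deriv f))
    (hM₀ : ∀ y, |f y| ≤ M₀) (hM₂ : ∀ y, |deriv (deriv f) y| ≤ M₂) (x : ℝ) :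
    levy φ f x = levyR φ f a₀ x :=
  (h.tendsto_trunc hf hf' hM₀ hM₂ x).limUnder_eq

lemma levy_neg (h : A12 φ α a₀ c₁ c₂) {f : ℝ → ℝ} {M₀ M₂ : ℝ}
    (hf : Differentiable ℝ f) (hf' : Differentiable ℝ (deriv f))
    (hM₀ : ∀ y, |f y| ≤ M₀) (hM₂ : ∀ y, |deriv (deriv f) y| ≤ M₂)
    {g : ℝ → ℝ} (hg : g = fun y => -(f y)) (x : ℝ) :
    levy φ g x = -(levyR φ f a₀ x) := by
  have ht := h.tendsto_trunc hf hf' hM₀ hM₂ x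
  have ht2 : Tendsto (fun ε => ∫ y in {y : ℝ | ε ≤ |x - y|}, φ (x - y) * (g x - g y))
      (𝓝[>] (0:ℝ)) (𝓝 (-(levyR φ f a₀ x))) := by
    have heq : ∀ ε : ℝ, (∫ y in {y : ℝ | ε ≤ |x - y|}, φ (x - y) * (g x - g y)) =
        -(∫ y in {y : ℝ | ε ≤ |x - y|}, φ (x - y) * (f x - f y)) := by
      intro ε
      rw [← integral_neg]
      refine integral_congr_ae (Eventually.of_forall fun y => ?_)
      rw [hg]; ring
    rw [show (fun ε => ∫ y in {y : ℝ | ε ≤ |x - y|}, φ (x - y) * (g x - g y)) =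
      fun ε => -(∫ y in {y : ℝ | ε ≤ |x - y|}, φ (x - y) * (f x - f y)) from funext heq]
    exact ht.neg
  exact ht2.limUnder_eq

lemma alignForce_eq (h : A12 φ α a₀ c₁ c₂) {f uu : ℝ → ℝ} {M₀ M₂ N₀ P₀ P₂ : ℝ}
    (hf : Differentiable ℝ f) (hf' : Differentiable ℝ (deriv f))
    (hM₀ : ∀ y, |f y| ≤ M₀) (hM₂ : ∀ y, |deriv (deriv f) y| ≤ M₂)
    (huc : Continuous uu) (hN₀ : ∀ y, |uu y| ≤ N₀)
    {m : ℝ → ℝ} (hmdef : m = fun y => f y * uu y)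
    (hm : Differentiable ℝ m) (hm' : Differentiable ℝ (deriv m))
    (hP₀ : ∀ y, |m y| ≤ P₀) (hP₂ : ∀ y, |deriv (deriv m) y| ≤ P₂) (x : ℝ) :
    alignForce φ f uu x = uu x * levyR φ f a₀ x - levyR φ m a₀ x := by
  have hfc : Continuous f := hf.continuous
  have hmc : Continuous m := hm.continuous
  have key : ∀ ε ∈ Set.Ioc (0:ℝ) a₀,
      (∫ y in {y : ℝ | ε ≤ |x - y|}, φ (x - y) * (uu y - uu x) * f y) =
      uu x * (∫ y in {y : ℝ | ε ≤ |x - y|}, φ (x - y) * (f x - f y)) -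
      ∫ y in {y : ℝ | ε ≤ |x - y|}, φ (x - y) * (m x - m y) := by
    intro ε hε
    have hSmeas : MeasurableSet {y : ℝ | ε ≤ |x - y|} :=
      measurableSet_le measurable_const (by fun_prop)
    have c1 : (∫ y in {y : ℝ | ε ≤ |x - y|}, φ (x - y) * (uu y - uu x) * f y) =
        ∫ z in {z : ℝ | ε ≤ |z|}, φ z * (uu (x - z) - uu x) * f (x - z) := by
      rw [← trunc_change x ε (fun z => φ z * (uu (x - z) - uu x) * f (x - z))]
      refine setIntegral_congr_fun hSmeas fun y _ => ?_
      simp [sub_sub_cancel]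
    have c2 : (∫ y in {y : ℝ | ε ≤ |x - y|}, φ (x - y) * (f x - f y)) =
        ∫ z in {z : ℝ | ε ≤ |z|}, φ z * (f x - f (x - z)) := by
      rw [← trunc_change x ε (fun z => φ z * (f x - f (x - z)))]
      refine setIntegral_congr_fun hSmeas fun y _ => ?_
      simp [sub_sub_cancel]
    have c3 : (∫ y in {y : ℝ | ε ≤ |x - y|}, φ (x - y) * (m x - m y)) =
        ∫ z in {z : ℝ | ε ≤ |z|}, φ z * (m x - m (x - z)) := by
      rw [← trunc_change x ε (fun z => φ z * (m x - m (x - z)))]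
      refine setIntegral_congr_fun hSmeas fun y _ => ?_
      simp [sub_sub_cancel]
    rw [c1, c2, c3]
    have i1 : IntegrableOn (fun z => φ z * (f x - f (x - z))) {z : ℝ | ε ≤ |z|} :=
      h.int_trunc hfc hM₀ hε x
    have i2 : IntegrableOn (fun z => φ z * (m x - m (x - z))) {z : ℝ | ε ≤ |z|} :=
      h.int_trunc hmc hP₀ hε x
    rw [← MeasureTheory.integral_const_mul, ← integral_sub (i1.const_mul (uu x)) i2]
    refine setIntegral_congr_fun (measurableSet_le measurable_const measurable_abs)
      fun z _ => ?_
    rw [hmdef]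
    ring
  have ht : Tendsto (fun ε => ∫ y in {y : ℝ | ε ≤ |x - y|}, φ (x - y) * (uu y - uu x) * f y)
      (𝓝[>] (0:ℝ)) (𝓝 (uu x * levyR φ f a₀ x - levyR φ m a₀ x)) := by
    refine Tendsto.congr' ?_ (((h.tendsto_trunc hf hf' hM₀ hM₂ x).const_mul (uu x)).sub
      (h.tendsto_trunc hm hm' hP₀ hP₂ x))
    filter_upwards [Ioc_mem_nhdsGT h.a₀pos] with ε hε
    exact (key ε hε).symm
  exact ht.limUnder_eq

end A12
lemma abs_second_diff_le' {f : ℝ → ℝ} (hf1 : Differentiable ℝ f)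
    (hf2 : Differentiable ℝ (deriv f)) {M : ℝ}
    (hM : ∀ y, |deriv (deriv f) y| ≤ M) (x z : ℝ) :
    |2 * f x - f (x - z) - f (x + z)| ≤ 2 * M * z ^ 2 := by
  rcases le_or_gt 0 z with hz|hz
  · exact abs_second_diff_le hf1 hf2 hM x z hz
  · have h0 := abs_second_diff_le hf1 hf2 hM x (-z) (by linarith)
    have e1 : x - -z = x + z := by ring
    have e2 : x + -z = x - z := by ring
    rw [e1, e2] at h0
    calc |2 * f x - f (x - z) - f (x + z)| = |2 * f x - f (x + z) - f (x - z)| := by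
          exact congrArg abs (by ring)
    _ ≤ 2 * M * (-z) ^ 2 := h0
    _ = 2 * M * z ^ 2 := by ring

lemma hasDerivAt_sub_shift {f : ℝ → ℝ} (hf : Differentiable ℝ f) (z x : ℝ) :
    HasDerivAt (fun y => f y - f (y - z)) (deriv f x - deriv f (x - z)) x := by
  have h1 : HasDerivAt (fun y => f (y - z)) (deriv f (x - z)) x := by
    simpa [sub_eq_add_neg] using hasDerivAt_shift hf (-z) x
  exact (hf x).hasDerivAt.sub h1

namespace A12

lemma hasDerivAt_levyR (h : A12 φ α a₀ c₁ c₂) {f : ℝ → ℝ} {M₀ M₁ M₂ M₃ : ℝ}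
    (hf : Differentiable ℝ f) (hf' : Differentiable ℝ (deriv f))
    (hf'' : Differentiable ℝ (deriv (deriv f)))
    (hM₀ : ∀ y, |f y| ≤ M₀) (hM₁ : ∀ y, |deriv f y| ≤ M₁)
    (hM₂ : ∀ y, |deriv (deriv f) y| ≤ M₂) (hM₃ : ∀ y, |deriv (deriv (deriv f)) y| ≤ M₃)
    (x₀ : ℝ) :
    HasDerivAt (fun x => levyR φ f a₀ x) (levyR φ (deriv f) a₀ x₀) x₀ := by
  have hin : HasDerivAt (fun x => ∫ z in Set.Ioc 0 a₀, φ z * (2 * f x - f (x - z) - f (x + z)))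
      (∫ z in Set.Ioc 0 a₀, φ z * (2 * deriv f x₀ - deriv f (x₀ - z) - deriv f (x₀ + z))) x₀ := by
    refine (hasDerivAt_integral_of_dominated_loc_of_deriv_le (s := Metric.ball x₀ 1) (Metric.ball_mem_nhds x₀ one_pos)
      (F := fun x z => φ z * (2 * f x - f (x - z) - f (x + z)))
      (F' := fun x z => φ z * (2 * deriv f x - deriv f (x - z) - deriv f (x + z)))
      (bound := fun z => c₁ * (2 * M₃) * z ^ (1 - α)) ?_ ?_ ?_ ?_ ?_ ?_).2
    · exact Eventually.of_forall fun x =>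
        h.inner_meas (by have := hf.continuous; fun_prop) measurableSet_Ioc h.ioc_subset_compl
    · exact h.int_inner hf hf' hM₂ x₀
    · exact h.inner_meas (by have := hf'.continuous; fun_prop)
        measurableSet_Ioc h.ioc_subset_compl
    · refine (ae_restrict_iff' measurableSet_Ioc).2 (Eventually.of_forall fun z hz => ?_)
      intro x _
      have hsd := abs_second_diff_le hf' hf'' hM₃ x z hz.1.le
      have hphi := h.phi_mul_sq_le hz
      have hM₃0 : 0 ≤ M₃ := le_trans (abs_nonneg _) (hM₃ 0)
      rw [Real.norm_eq_abs, abs_mul]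
      calc |φ z| * |2 * deriv f x - deriv f (x - z) - deriv f (x + z)|
          ≤ |φ z| * (2 * M₃ * z ^ 2) := mul_le_mul_of_nonneg_left hsd (abs_nonneg _)
      _ = (2 * M₃) * (|φ z| * z ^ 2) := by ring
      _ ≤ (2 * M₃) * (c₁ * z ^ (1 - α)) := mul_le_mul_of_nonneg_left hphi (by positivity)
      _ = c₁ * (2 * M₃) * z ^ (1 - α) := by ring
    · exact h.int_rpow_in.const_mul _
    · refine (ae_restrict_iff' measurableSet_Ioc).2 (Eventually.of_forall fun z _ => ?_)
      intro x _
      exact (hasDerivAt_SD hf z x).const_mul (φ z)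
  have hout : HasDerivAt (fun x => ∫ z in {z : ℝ | a₀ < |z|}, φ z * (f x - f (x - z)))
      (∫ z in {z : ℝ | a₀ < |z|}, φ z * (deriv f x₀ - deriv f (x₀ - z))) x₀ := by
    refine (hasDerivAt_integral_of_dominated_loc_of_deriv_le (s := Metric.ball x₀ 1) (Metric.ball_mem_nhds x₀ one_pos)
      (F := fun x z => φ z * (f x - f (x - z)))
      (F' := fun x z => φ z * (deriv f x - deriv f (x - z)))
      (bound := fun z => 2 * M₁ * |φ z|) ?_ ?_ ?_ ?_ ?_ ?_).2
    · exact Eventually.of_forall fun x =>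
        h.inner_meas (by have := hf.continuous; fun_prop) out_open.measurableSet h.out_subset_compl
    · exact h.int_outer hf.continuous hM₀ x₀
    · exact h.inner_meas (by have := hf'.continuous; fun_prop)
        out_open.measurableSet h.out_subset_compl
    · refine Eventually.of_forall fun z => ?_
      intro x _
      rw [Real.norm_eq_abs, abs_mul]
      have hb : |deriv f x - deriv f (x - z)| ≤ 2 * M₁ := by
        calc |deriv f x - deriv f (x - z)| ≤ |deriv f x| + |deriv f (x - z)| := abs_sub _ _
        _ ≤ 2 * M₁ := by linarith [hM₁ x, hM₁ (x - z)]
      calc |φ z| * |deriv f x - deriv f (x - z)| ≤ |φ z| * (2 * M₁) :=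
            mul_le_mul_of_nonneg_left hb (abs_nonneg _)
      _ = 2 * M₁ * |φ z| := by ring
    · exact h.tail_abs_int.const_mul _
    · refine Eventually.of_forall fun z => ?_
      intro x _
      exact (hasDerivAt_sub_shift hf z x).const_mul (φ z)
  exact hin.add hout

lemma hasDerivWithinAt_levyR (h : A12 φ α a₀ c₁ c₂) {T x : ℝ} {F v : ℝ → ℝ → ℝ}
    {MF KF Mv Kv : ℝ}
    (hd : ∀ y, ∀ s ∈ Set.Icc 0 T, HasDerivWithinAt (fun s' => F y s') (v y s) (Set.Icc 0 T) s)
    (hF1 : ∀ s ∈ Set.Icc 0 T, Differentiable ℝ (fun y => F y s))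
    (hF2 : ∀ s ∈ Set.Icc 0 T, Differentiable ℝ (deriv (fun y => F y s)))
    (hKF : ∀ s ∈ Set.Icc 0 T, ∀ y, |deriv (deriv (fun y => F y s)) y| ≤ KF)
    (hMF : ∀ s ∈ Set.Icc 0 T, ∀ y, |F y s| ≤ MF)
    (hv1 : ∀ s ∈ Set.Icc 0 T, Differentiable ℝ (fun y => v y s))
    (hv2 : ∀ s ∈ Set.Icc 0 T, Differentiable ℝ (deriv (fun y => v y s)))
    (hMv : ∀ s ∈ Set.Icc 0 T, ∀ y, |v y s| ≤ Mv)
    (hKv : ∀ s ∈ Set.Icc 0 T, ∀ y, |deriv (deriv (fun y => v y s)) y| ≤ Kv)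
    {t : ℝ} (ht : t ∈ Set.Icc 0 T) :
    HasDerivWithinAt (fun s => levyR φ (fun y => F y s) a₀ x)
      (levyR φ (fun y => v y t) a₀ x) (Set.Icc 0 T) t := by
  have hKv0 : 0 ≤ Kv := le_trans (abs_nonneg _) (hKv t ht 0)
  have hMv0 : 0 ≤ Mv := le_trans (abs_nonneg _) (hMv t ht 0)
  have hin : HasDerivWithinAt
      (fun s => ∫ z in Set.Ioc 0 a₀, φ z * (2 * F x s - F (x - z) s - F (x + z) s))
      (∫ z in Set.Ioc 0 a₀, φ z * (2 * v x t - v (x - z) t - v (x + z) t))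
      (Set.Icc 0 T) t := by
    refine hasDerivWithinAt_integral_of_bound (convex_Icc 0 T) ht
      (fun z s => φ z * (2 * F x s - F (x - z) s - F (x + z) s))
      (fun z s => φ z * (2 * v x s - v (x - z) s - v (x + z) s))
      (fun z => |φ z| * (2 * Kv * z ^ 2)) ?_ ?_ ?_ ?_ ?_ ?_
    · intro s hs
      have hc := (hF1 s hs).continuous
      exact h.inner_meas (by fun_prop) measurableSet_Ioc h.ioc_subset_compl
    · have hc := (hv1 t ht).continuous
      exact h.inner_meas (by fun_prop) measurableSet_Ioc h.ioc_subset_compl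
    · exact h.int_inner (hF1 t ht) (hF2 t ht) (hKF t ht) x
    · refine Integrable.mono' (h.int_rpow_in.const_mul (c₁ * (2 * Kv))) ?_ ?_
      · exact ((h.phi_aesm.norm.mul (Continuous.aestronglyMeasurable (by fun_prop :
          Continuous fun z : ℝ => 2 * Kv * z ^ 2))).restrict)
      · refine (ae_restrict_iff' measurableSet_Ioc).2 (Eventually.of_forall fun z hz => ?_)
        have hphi := h.phi_mul_sq_le hz
        rw [Real.norm_eq_abs, abs_mul, abs_of_nonneg (by positivity : (0:ℝ) ≤ 2 * Kv * z ^ 2),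
          abs_abs]
        calc |φ z| * (2 * Kv * z ^ 2) = (2 * Kv) * (|φ z| * z ^ 2) := by ring
        _ ≤ (2 * Kv) * (c₁ * z ^ (1 - α)) := mul_le_mul_of_nonneg_left hphi (by positivity)
        _ = c₁ * (2 * Kv) * z ^ (1 - α) := by ring
    · intro z s hs
      exact ((((hd x s hs).const_mul 2).sub (hd (x - z) s hs)).sub (hd (x + z) s hs)).const_mul
        (φ z)
    · intro z s hs
      have hsd := abs_second_diff_le' (hv1 s hs) (hv2 s hs) (hKv s hs) x z
      rw [abs_mul]
      exact mul_le_mul_of_nonneg_left hsd (abs_nonneg _)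
  have hout : HasDerivWithinAt
      (fun s => ∫ z in {z : ℝ | a₀ < |z|}, φ z * (F x s - F (x - z) s))
      (∫ z in {z : ℝ | a₀ < |z|}, φ z * (v x t - v (x - z) t))
      (Set.Icc 0 T) t := by
    refine hasDerivWithinAt_integral_of_bound (convex_Icc 0 T) ht
      (fun z s => φ z * (F x s - F (x - z) s))
      (fun z s => φ z * (v x s - v (x - z) s))
      (fun z => |φ z| * (2 * Mv)) ?_ ?_ ?_ ?_ ?_ ?_
    · intro s hs
      have hc := (hF1 s hs).continuous
      exact h.inner_meas (by fun_prop) out_open.measurableSet h.out_subset_compl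
    · have hc := (hv1 t ht).continuous
      exact h.inner_meas (by fun_prop) out_open.measurableSet h.out_subset_compl
    · exact h.int_outer (hF1 t ht).continuous (hMF t ht) x
    · have hb0 : IntegrableOn (fun z => 2 * Mv * |φ z|) {z : ℝ | a₀ < |z|} :=
        h.tail_abs_int.const_mul _
      exact hb0.congr_fun (fun z _ => by ring) out_open.measurableSet
    · intro z s hs
      exact ((hd x s hs).sub (hd (x - z) s hs)).const_mul (φ z)
    · intro z s hs
      rw [abs_mul]
      refine mul_le_mul_of_nonneg_left ?_ (abs_nonneg _)
      calc |v x s - v (x - z) s| ≤ |v x s| + |v (x - z) s| := abs_sub _ _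
      _ ≤ 2 * Mv := by linarith [hMv s hs x, hMv s hs (x - z)]
  exact hin.add hout

end A12
section PGsec

/-- smooth periodic two-variable functions on ℝ × [0,T] -/
def PG (T : ℝ) (F : ℝ → ℝ → ℝ) : Prop :=
  ContDiffOn ℝ ((⊤ : ℕ∞) : WithTop ℕ∞) (Function.uncurry F) (Set.univ ×ˢ Set.Icc 0 T) ∧
    ∀ x t, F (x + 1) t = F x t

variable {T : ℝ} {F G : ℝ → ℝ → ℝ}

lemma PG.uQ {T : ℝ} (hT : 0 < T) :
    UniqueDiffOn ℝ ((Set.univ : Set ℝ) ×ˢ Set.Icc (0:ℝ) T) :=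
  (uniqueDiffOn_univ : UniqueDiffOn ℝ (Set.univ : Set ℝ)).prod (uniqueDiffOn_Icc hT)

lemma PG.mul (hF : PG T F) (hG : PG T G) : PG T (fun x t => F x t * G x t) := by
  refine ⟨?_, fun x t => ?_⟩
  · exact hF.1.mul hG.1
  · show F (x + 1) t * G (x + 1) t = F x t * G x t
    rw [hF.2, hG.2]

lemma PG.bound (hF : PG T F) : ∃ M, 0 ≤ M ∧ ∀ x, ∀ t ∈ Set.Icc 0 T, |F x t| ≤ M :=
  exists_bound_of_periodic F hF.1.continuousOn hF.2

lemma PG.spatial (hF : PG T F) {t : ℝ} (ht : t ∈ Set.Icc 0 T) :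
    ContDiff ℝ ((⊤ : ℕ∞) : WithTop ℕ∞) (fun y => F y t) := by
  rw [← contDiffOn_univ]
  have hmap : Set.MapsTo (fun y : ℝ => (y, t)) Set.univ (Set.univ ×ˢ Set.Icc 0 T) :=
    fun y _ => ⟨trivial, ht⟩
  exact hF.1.comp ((contDiff_id.prodMk contDiff_const).contDiffOn) hmap

lemma PG.diffWithin (hF : PG T F) {p : ℝ × ℝ} (hp : p ∈ Set.univ ×ˢ Set.Icc (0:ℝ) T) :
    DifferentiableWithinAt ℝ (Function.uncurry F) (Set.univ ×ˢ Set.Icc (0:ℝ) T) p :=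
  (hF.1.differentiableOn (by simp)) p hp

lemma PG.hasDerivAt_x (hF : PG T F) (x : ℝ) {t : ℝ} (ht : t ∈ Set.Icc 0 T) :
    HasDerivAt (fun y => F y t)
      ((fderivWithin ℝ (Function.uncurry F) (Set.univ ×ˢ Set.Icc 0 T) (x, t)) (1, 0)) x := by
  have hhas : HasFDerivWithinAt (Function.uncurry F)
      (fderivWithin ℝ (Function.uncurry F) (Set.univ ×ˢ Set.Icc 0 T) (x, t))
      (Set.univ ×ˢ Set.Icc 0 T) (x, t) :=
    (hF.diffWithin ⟨trivial, ht⟩).hasFDerivWithinAt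
  have hc : HasDerivAt (fun y : ℝ => (y, t)) ((1:ℝ), (0:ℝ)) x :=
    (hasDerivAt_id x).prodMk (hasDerivAt_const x t)
  have hmap : Set.MapsTo (fun y : ℝ => (y, t)) Set.univ (Set.univ ×ˢ Set.Icc 0 T) :=
    fun y _ => ⟨trivial, ht⟩
  have h0 := hhas.comp_hasDerivWithinAt x hc.hasDerivWithinAt hmap
  rw [← hasDerivWithinAt_univ]
  exact h0

lemma PG.deriv_x_eq (hF : PG T F) (x : ℝ) {t : ℝ} (ht : t ∈ Set.Icc 0 T) :
    deriv (fun y => F y t) x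
      = (fderivWithin ℝ (Function.uncurry F) (Set.univ ×ˢ Set.Icc 0 T) (x, t)) (1, 0) :=
  (hF.hasDerivAt_x x ht).deriv

lemma PG.hasDerivWithinAt_t_raw (hF : PG T F) (x : ℝ) {t : ℝ} (ht : t ∈ Set.Icc 0 T) :
    HasDerivWithinAt (fun s => F x s)
      ((fderivWithin ℝ (Function.uncurry F) (Set.univ ×ˢ Set.Icc 0 T) (x, t)) (0, 1))
      (Set.Icc 0 T) t := by
  have hhas : HasFDerivWithinAt (Function.uncurry F)
      (fderivWithin ℝ (Function.uncurry F) (Set.univ ×ˢ Set.Icc 0 T) (x, t))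
      (Set.univ ×ˢ Set.Icc 0 T) (x, t) :=
    (hF.diffWithin ⟨trivial, ht⟩).hasFDerivWithinAt
  have hc : HasDerivAt (fun s : ℝ => (x, s)) ((0:ℝ), (1:ℝ)) t :=
    (hasDerivAt_const t x).prodMk (hasDerivAt_id t)
  have hmap : Set.MapsTo (fun s : ℝ => (x, s)) (Set.Icc 0 T) (Set.univ ×ˢ Set.Icc 0 T) :=
    fun s hs => ⟨trivial, hs⟩
  exact hhas.comp_hasDerivWithinAt t hc.hasDerivWithinAt hmap

lemma PG.derivWithin_t_eq (hF : PG T F) (hT : 0 < T) (x : ℝ) {t : ℝ} (ht : t ∈ Set.Icc 0 T) :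
    derivWithin (fun s => F x s) (Set.Icc 0 T) t
      = (fderivWithin ℝ (Function.uncurry F) (Set.univ ×ˢ Set.Icc 0 T) (x, t)) (0, 1) :=
  (hF.hasDerivWithinAt_t_raw x ht).derivWithin (uniqueDiffOn_Icc hT t ht)

lemma PG.hasDerivWithinAt_t (hF : PG T F) (hT : 0 < T) (x : ℝ) {t : ℝ} (ht : t ∈ Set.Icc 0 T) :
    HasDerivWithinAt (fun s => F x s) (derivWithin (fun s => F x s) (Set.Icc 0 T) t)
      (Set.Icc 0 T) t := by
  rw [hF.derivWithin_t_eq hT x ht]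
  exact hF.hasDerivWithinAt_t_raw x ht

lemma PG.fderivWithin_contDiffOn (hF : PG T F) (hT : 0 < T) :
    ContDiffOn ℝ ((⊤ : ℕ∞) : WithTop ℕ∞)
      (fderivWithin ℝ (Function.uncurry F) (Set.univ ×ˢ Set.Icc 0 T))
      (Set.univ ×ˢ Set.Icc 0 T) := by
  refine hF.1.fderivWithin (PG.uQ hT) ?_
  exact_mod_cast le_top

lemma PG.dx (hF : PG T F) (hT : 0 < T) : PG T (fun x t => deriv (fun y => F y t) x) := by
  constructor
  · have h1 : ContDiffOn ℝ ((⊤ : ℕ∞) : WithTop ℕ∞)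
        (fun p : ℝ × ℝ =>
          (fderivWithin ℝ (Function.uncurry F) (Set.univ ×ˢ Set.Icc 0 T) p) ((1:ℝ), (0:ℝ)))
        (Set.univ ×ˢ Set.Icc 0 T) :=
      (hF.fderivWithin_contDiffOn hT).clm_apply contDiffOn_const
    refine h1.congr ?_
    rintro ⟨x, t⟩ hp
    exact hF.deriv_x_eq x hp.2
  · intro x t
    have hper : ∀ y : ℝ, F (y + 1) t = F y t := fun y => hF.2 y t
    calc deriv (fun y => F y t) (x + 1) = deriv (fun y => F (y + 1) t) x :=
          (deriv_comp_add_const (fun y => F y t) 1 x).symm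
    _ = deriv (fun y => F y t) x := by
          congr 1
          funext y
          exact hper y

lemma PG.dt (hF : PG T F) (hT : 0 < T) :
    PG T (fun x t => derivWithin (fun s => F x s) (Set.Icc 0 T) t) := by
  constructor
  · have h1 : ContDiffOn ℝ ((⊤ : ℕ∞) : WithTop ℕ∞)
        (fun p : ℝ × ℝ =>
          (fderivWithin ℝ (Function.uncurry F) (Set.univ ×ˢ Set.Icc 0 T) p) ((0:ℝ), (1:ℝ)))
        (Set.univ ×ˢ Set.Icc 0 T) :=
      (hF.fderivWithin_contDiffOn hT).clm_apply contDiffOn_const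
    refine h1.congr ?_
    rintro ⟨x, t⟩ hp
    exact hF.derivWithin_t_eq hT x hp.2
  · intro x t
    have : (fun s => F (x + 1) s) = fun s => F x s := funext fun s => hF.2 x s
    simp only [Function.uncurry] at this ⊢
    rw [this]

lemma PG.clairaut (hF : PG T F) (hT : 0 < T) (x : ℝ) {t : ℝ} (ht : t ∈ Set.Icc 0 T) :
    derivWithin (fun s => deriv (fun y => F y s) x) (Set.Icc 0 T) t
      = deriv (fun y => derivWithin (fun s => F y s) (Set.Icc 0 T) t) x := by
  set Q := Set.univ ×ˢ Set.Icc (0:ℝ) T with hQ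
  set A := fderivWithin ℝ (Function.uncurry F) Q with hA
  have hmem : (x, t) ∈ Q := ⟨trivial, ht⟩
  have hAdiff : DifferentiableWithinAt ℝ A Q (x, t) :=
    ((hF.fderivWithin_contDiffOn hT).differentiableOn (by simp)) _ hmem
  have hud : UniqueDiffWithinAt ℝ Q (x, t) := PG.uQ hT _ hmem
  -- LHS
  have e1 : derivWithin (fun s => deriv (fun y => F y s) x) (Set.Icc 0 T) t
      = (fderivWithin ℝ A Q (x, t)) (0, 1) (1, 0) := by
    rw [(hF.dx hT).derivWithin_t_eq hT x ht]
    have hcongr : fderivWithin ℝ (Function.uncurry fun x t => deriv (fun y => F y t) x) Q (x, t)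
        = fderivWithin ℝ (fun p : ℝ × ℝ => A p ((1:ℝ), (0:ℝ))) Q (x, t) := by
      refine fderivWithin_congr ?_ ?_
      · rintro ⟨y, s⟩ hp
        exact hF.deriv_x_eq y hp.2
      · exact hF.deriv_x_eq x ht
    rw [hcongr, fderivWithin_clm_apply hud hAdiff (differentiableWithinAt_const _)]
    rw [fderivWithin_const_apply]
    simp
  -- RHS
  have e2 : deriv (fun y => derivWithin (fun s => F y s) (Set.Icc 0 T) t) x
      = (fderivWithin ℝ A Q (x, t)) (1, 0) (0, 1) := by
    rw [(hF.dt hT).deriv_x_eq x ht]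
    have hcongr : fderivWithin ℝ
        (Function.uncurry fun x t => derivWithin (fun s => F x s) (Set.Icc 0 T) t) Q (x, t)
        = fderivWithin ℝ (fun p : ℝ × ℝ => A p ((0:ℝ), (1:ℝ))) Q (x, t) := by
      refine fderivWithin_congr ?_ ?_
      · rintro ⟨y, s⟩ hp
        exact hF.derivWithin_t_eq hT y hp.2
      · exact hF.derivWithin_t_eq hT x ht
    rw [hcongr, fderivWithin_clm_apply hud hAdiff (differentiableWithinAt_const _)]
    rw [fderivWithin_const_apply]
    simp
  rw [e1, e2]
  have hsym : IsSymmSndFDerivWithinAt ℝ (Function.uncurry F) Q (x, t) := by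
    refine (hF.1 _ hmem).isSymmSndFDerivWithinAt ?_ (PG.uQ hT) ?_ hmem
    · rw [minSmoothness_of_isRCLikeNormedField]
      exact WithTop.coe_le_coe.2 (le_top : (2:ℕ∞) ≤ ⊤)
    · have hint : interior Q = Set.univ ×ˢ Set.Ioo (0:ℝ) T := by
        rw [hQ, interior_prod_eq, interior_univ, interior_Icc]
      have hcl : closure (interior Q) = Set.univ ×ˢ Set.Icc (0:ℝ) T := by
        rw [hint, closure_prod_eq, closure_univ, closure_Ioo hT.ne]
      rw [hcl]
      exact hmem
  exact hsym (0, 1) (1, 0)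

end PGsec
lemma one_le_inf : (1 : WithTop ℕ∞) ≤ ((⊤:ℕ∞) : WithTop ℕ∞) := by
  rw [show ((⊤:ℕ∞) : WithTop ℕ∞) = (⊤:ℕ∞) from rfl]
  norm_cast

lemma slice_diffs {f : ℝ → ℝ} (hf : ContDiff ℝ ((⊤:ℕ∞) : WithTop ℕ∞) f) :
    Differentiable ℝ f ∧ Differentiable ℝ (deriv f) ∧ Differentiable ℝ (deriv (deriv f)) := by
  have h1 := contDiff_infty_iff_deriv.1 hf
  have h2 := contDiff_infty_iff_deriv.1 h1.2
  have h3 := contDiff_infty_iff_deriv.1 h2.2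
  exact ⟨h1.1, h2.1, h3.1⟩

lemma periodic_deriv' {f : ℝ → ℝ} (hper : ∀ y, f (y + 1) = f y) (x : ℝ) :
    deriv f (x + 1) = deriv f x := by
  calc deriv f (x + 1) = deriv (fun y => f (y + 1)) x := (deriv_comp_add_const f 1 x).symm
  _ = deriv f x := by congr 1; funext y; exact hper y

lemma exists_bound_of_periodic1 {f : ℝ → ℝ} (hc : Continuous f)
    (hper : ∀ y, f (y + 1) = f y) : ∃ M, 0 ≤ M ∧ ∀ y, |f y| ≤ M := by
  obtain ⟨M, hM0, hM⟩ := exists_bound_of_periodic (T := 0) (fun x _ => f x)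
    (Continuous.continuousOn (by fun_prop)) (fun x _ => hper x)
  exact ⟨M, hM0, fun y => hM y 0 ⟨le_rfl, le_rfl⟩⟩

lemma slice_bounds {f : ℝ → ℝ} (hf : ContDiff ℝ ((⊤:ℕ∞) : WithTop ℕ∞) f)
    (hper : ∀ y, f (y + 1) = f y) :
    ∃ M₀ M₁ M₂ M₃ : ℝ, (∀ y, |f y| ≤ M₀) ∧ (∀ y, |deriv f y| ≤ M₁) ∧
      (∀ y, |deriv (deriv f) y| ≤ M₂) ∧ (∀ y, |deriv (deriv (deriv f)) y| ≤ M₃) := by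
  obtain ⟨hd0, hd1, hd2⟩ := slice_diffs hf
  have hc0 : Continuous f := hd0.continuous
  have hc1 : Continuous (deriv f) := hd1.continuous
  have hc2 : Continuous (deriv (deriv f)) := hd2.continuous
  have hc3 : Continuous (deriv (deriv (deriv f))) := by
    have h1 := contDiff_infty_iff_deriv.1 hf
    have h2 := contDiff_infty_iff_deriv.1 h1.2
    have h3 := contDiff_infty_iff_deriv.1 h2.2
    exact ((contDiff_infty_iff_deriv.1 h3.2).1).continuous
  have hp1 : ∀ y, deriv f (y + 1) = deriv f y := periodic_deriv' hper
  have hp2 : ∀ y, deriv (deriv f) (y + 1) = deriv (deriv f) y := periodic_deriv' hp1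
  have hp3 : ∀ y, deriv (deriv (deriv f)) (y + 1) = deriv (deriv (deriv f)) y :=
    periodic_deriv' hp2
  obtain ⟨M₀, _, h₀⟩ := exists_bound_of_periodic1 hc0 hper
  obtain ⟨M₁, _, h₁⟩ := exists_bound_of_periodic1 hc1 hp1
  obtain ⟨M₂, _, h₂⟩ := exists_bound_of_periodic1 hc2 hp2
  obtain ⟨M₃, _, h₃⟩ := exists_bound_of_periodic1 hc3 hp3
  exact ⟨M₀, M₁, M₂, M₃, h₀, h₁, h₂, h₃⟩

lemma levyR_neg (φ f : ℝ → ℝ) (a₀ x : ℝ) :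
    levyR φ (fun y => -(f y)) a₀ x = -(levyR φ f a₀ x) := by
  unfold levyR
  rw [neg_add, ← integral_neg, ← integral_neg]
  congr 1
  · refine integral_congr_ae (Eventually.of_forall fun z => ?_)
    ring
  · refine integral_congr_ae (Eventually.of_forall fun z => ?_)
    ring

lemma levyR_zero (φ : ℝ → ℝ) (a₀ x : ℝ) :
    levyR φ (fun _ => (0:ℝ)) a₀ x = 0 := by
  unfold levyR
  simp

lemma derivWithin_icc_zero (g : ℝ → ℝ) : derivWithin g (Set.Icc (0:ℝ) 0) 0 = 0 := by
  apply derivWithin_zero_of_not_accPt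
  rw [accPt_iff_clusterPt, Set.Icc_self, Filter.inf_principal, Set.compl_inter_self, Filter.principal_empty]
  exact fun h0 => h0.neBot.ne (inf_bot_eq _)
theorem stmt10 (φ : ℝ → ℝ) (α a₀ c₁ c₂ : ℝ) (h : A12 φ α a₀ c₁ c₂)
    (T : ℝ) (hT : 0 ≤ T) (ρ u : ℝ → ℝ → ℝ) (hsol : EASol φ T ρ u) :
    let G := fun (x t : ℝ) => deriv (fun y => u y t) x - levy φ (fun y => ρ y t) x
    ∀ x : ℝ, ∀ t ∈ Set.Icc 0 T,
      derivWithin (fun s => G x s) (Set.Icc 0 T) t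
        + deriv (fun y => G y t * u y t) x = 0 := by
  intro G x t ht
  have hG : ∀ (y s : ℝ), G y s = deriv (fun y' => u y' s) y - levy φ (fun y' => ρ y' s) y :=
    fun _ _ => rfl
  simp only [hG]
  have hρPG : PG T ρ := ⟨hsol.smooth_rho.of_le (by simp), hsol.periodic_rho⟩
  have huPG : PG T u := ⟨hsol.smooth_u.of_le (by simp), hsol.periodic_u⟩
  have hmPG : PG T (fun z s => ρ z s * u z s) := hρPG.mul huPG
  have hrS := hρPG.spatial ht
  have hmS : ContDiff ℝ ((⊤:ℕ∞) : WithTop ℕ∞) (fun y => ρ y t * u y t) := hmPG.spatial ht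
  have huS := huPG.spatial ht
  obtain ⟨hr0, hr1, hr2⟩ := slice_diffs hrS
  obtain ⟨hm0, hm1, hm2⟩ := slice_diffs hmS
  obtain ⟨Mr0, Mr1, Mr2, Mr3, hMr0, hMr1, hMr2, hMr3⟩ :=
    slice_bounds hrS (fun y => hsol.periodic_rho y t)
  obtain ⟨Mm0, Mm1, Mm2, Mm3, hMm0, hMm1, hMm2, hMm3⟩ :=
    slice_bounds hmS (fun y => by
      show ρ (y + 1) t * u (y + 1) t = ρ y t * u y t
      rw [hsol.periodic_rho, hsol.periodic_u])
  obtain ⟨Nu, _, hNu⟩ := exists_bound_of_periodic1 huS.continuous (fun y => hsol.periodic_u y t)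
  have hlev_rt : ∀ y, levy φ (fun y' => ρ y' t) y = levyR φ (fun y' => ρ y' t) a₀ y :=
    fun y => h.levy_eq hr0 hr1 hMr0 hMr2 y
  have hAF : ∀ y, alignForce φ (fun y' => ρ y' t) (fun y' => u y' t) y
      = u y t * levyR φ (fun y' => ρ y' t) a₀ y - levyR φ (fun y' => ρ y' t * u y' t) a₀ y :=
    fun y => h.alignForce_eq hr0 hr1 hMr0 hMr2 huS.continuous hNu rfl hm0 hm1 hMm0 hMm2 y
  have hGu : ∀ y, (deriv (fun y' => u y' t) y - levy φ (fun y' => ρ y' t) y) * u y t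
      = -(derivWithin (fun s => u y s) (Set.Icc 0 T) t)
        - levyR φ (fun y' => ρ y' t * u y' t) a₀ y := by
    intro y
    have hmom := hsol.mom y t ht
    rw [hAF y] at hmom
    rw [hlev_rt y]
    linear_combination hmom
  have hmass : ∀ y, deriv (fun y' => ρ y' t * u y' t) y
      = -(derivWithin (fun s => ρ y s) (Set.Icc 0 T) t) := by
    intro y
    have := hsol.mass y t ht
    linarith
  have hmderiv : HasDerivAt (fun y => levyR φ (fun y' => ρ y' t * u y' t) a₀ y)
      (levyR φ (deriv (fun y' => ρ y' t * u y' t)) a₀ x) x :=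
    h.hasDerivAt_levyR hm0 hm1 hm2 hMm0 hMm1 hMm2 hMm3 x
  have hmneg : levyR φ (deriv (fun y' => ρ y' t * u y' t)) a₀ x
      = -(levyR φ (fun y' => derivWithin (fun s => ρ y' s) (Set.Icc 0 T) t) a₀ x) := by
    rw [show deriv (fun y' => ρ y' t * u y' t)
        = fun y' => -(derivWithin (fun s => ρ y' s) (Set.Icc 0 T) t) from funext hmass]
    exact levyR_neg φ _ a₀ x
  rcases eq_or_lt_of_le hT with hT0 | hTpos
  · -- degenerate case T = 0
    subst hT0
    have ht0 : t = 0 := le_antisymm ht.2 ht.1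
    subst ht0
    rw [derivWithin_icc_zero]
    have hGu0 : (fun y => (deriv (fun y' => u y' 0) y - levy φ (fun y' => ρ y' 0) y) * u y 0)
        = fun y => -(levyR φ (fun y' => ρ y' 0 * u y' 0) a₀ y) := by
      funext y
      rw [hGu y, derivWithin_icc_zero]
      ring
    rw [hGu0, (hmderiv.fun_neg).deriv, hmneg]
    rw [show (fun y' => derivWithin (fun s => ρ y' s) (Set.Icc (0:ℝ) 0) 0) = fun _ => (0:ℝ)
      from funext fun y' => derivWithin_icc_zero _]
    rw [levyR_zero]
    norm_num
  · -- main case T > 0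
    have hUD := uniqueDiffOn_Icc hTpos
    have hvPG : PG T (fun z s => derivWithin (fun s' => ρ z s') (Set.Icc 0 T) s) :=
      hρPG.dt hTpos
    have hdxuPG := huPG.dx hTpos
    have hdtuPG := huPG.dt hTpos
    obtain ⟨MF, _, hMF⟩ := hρPG.bound
    obtain ⟨KF, _, hKF⟩ := ((hρPG.dx hTpos).dx hTpos).bound
    obtain ⟨Mv, _, hMv⟩ := hvPG.bound
    obtain ⟨Kv, _, hKv⟩ := ((hvPG.dx hTpos).dx hTpos).bound
    have hA1 : HasDerivWithinAt (fun s => deriv (fun y => u y s) x)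
        (derivWithin (fun s => deriv (fun y => u y s) x) (Set.Icc 0 T) t) (Set.Icc 0 T) t :=
      hdxuPG.hasDerivWithinAt_t hTpos x ht
    have hlevR : HasDerivWithinAt (fun s => levyR φ (fun y => ρ y s) a₀ x)
        (levyR φ (fun y => derivWithin (fun s' => ρ y s') (Set.Icc 0 T) t) a₀ x)
        (Set.Icc 0 T) t := by
      refine h.hasDerivWithinAt_levyR
        (F := ρ) (v := fun z s => derivWithin (fun s' => ρ z s') (Set.Icc 0 T) s)
        (MF := MF) (KF := KF) (Mv := Mv) (Kv := Kv)
        (fun y s hs => hρPG.hasDerivWithinAt_t hTpos y hs)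
        (fun s hs => (hρPG.spatial hs).differentiable (by simp))
        (fun s hs => (slice_diffs (hρPG.spatial hs)).2.1)
        (fun s hs y => hKF y s hs)
        (fun s hs y => hMF y s hs)
        (fun s hs => (hvPG.spatial hs).differentiable (by simp))
        (fun s hs => (slice_diffs (hvPG.spatial hs)).2.1)
        (fun s hs y => hMv y s hs)
        (fun s hs y => hKv y s hs) ht
    have hlev : HasDerivWithinAt (fun s => levy φ (fun y => ρ y s) x)
        (levyR φ (fun y => derivWithin (fun s' => ρ y s') (Set.Icc 0 T) t) a₀ x)
        (Set.Icc 0 T) t := by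
      refine hlevR.congr (fun s hs => ?_) ?_
      · exact h.levy_eq (slice_diffs (hρPG.spatial hs)).1 (slice_diffs (hρPG.spatial hs)).2.1
          (fun y => hMF y s hs) (fun y => hKF y s hs) x
      · exact h.levy_eq hr0 hr1 hMr0 hMr2 x
    have hAterm : derivWithin
        (fun s => deriv (fun y => u y s) x - levy φ (fun y => ρ y s) x) (Set.Icc 0 T) t
        = derivWithin (fun s => deriv (fun y => u y s) x) (Set.Icc 0 T) t
          - levyR φ (fun y => derivWithin (fun s' => ρ y s') (Set.Icc 0 T) t) a₀ x :=
      (hA1.sub hlev).derivWithin (hUD t ht)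
    have h1 : HasDerivAt (fun y => derivWithin (fun s => u y s) (Set.Icc 0 T) t)
        (deriv (fun y => derivWithin (fun s => u y s) (Set.Icc 0 T) t) x) x :=
      (((hdtuPG.spatial ht).differentiable (by simp)) x).hasDerivAt
    have hBfun : (fun y => (deriv (fun y' => u y' t) y - levy φ (fun y' => ρ y' t) y) * u y t)
        = fun y => -(derivWithin (fun s => u y s) (Set.Icc 0 T) t)
            - levyR φ (fun y' => ρ y' t * u y' t) a₀ y := funext hGu
    have hB : deriv
        (fun y => (deriv (fun y' => u y' t) y - levy φ (fun y' => ρ y' t) y) * u y t) x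
        = -(deriv (fun y => derivWithin (fun s => u y s) (Set.Icc 0 T) t) x)
          - levyR φ (deriv (fun y' => ρ y' t * u y' t)) a₀ x := by
      rw [hBfun]
      exact ((h1.neg).sub hmderiv).deriv
    rw [hAterm, hB, hmneg]
    have hclair := huPG.clairaut hTpos x ht
    rw [hclair]
    ring
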